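/- arXiv:2507.10359 — 2 statements merged into one kernel-verified Lean document; each statement's English description precedes it below -/
import Mathlib

section
/- Let γ : [0,1] → ℝ^d be continuously differentiable and m ≥ 1. Define the Bézier curve B(t) = Σ_{k=0}^{m} C(m,k) t^k (1-t)^{m-k} γ(k/m) with control points γ(k/m). Then ∫₀¹ ‖B'(t)‖² dt ≤ ∫₀¹ ‖γ'(t)‖² dt. -/
/-!
Write `b_{n,k}` for the Bernstein basis on `[0,1]`. The derivative of a Bézier curve of degree
`n + 1` with control points `P k` is `∑ b_{n,k}(t) • (n + 1) • (P (k + 1) - P k)`, a convex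
combination, so by convexity of `‖·‖²` its squared norm is at most
`∑ b_{n,k}(t) ‖(n + 1) • (P (k + 1) - P k)‖²`. Since `∫₀¹ b_{n,k} = 1 / (n + 1)`, the energy of the
Bézier curve is at most `(n + 1) ∑ ‖P (k + 1) - P k‖²`. For `P k = γ (k / (n + 1))`, Jensen's
inequality on each interval `[k / (n + 1), (k + 1) / (n + 1)]` bounds `(n + 1) ‖P (k + 1) - P k‖²`
by the energy of `γ` on that interval.
-/

open MeasureTheory intervalIntegral Polynomial Finset

lemma bernsteinPolynomial_eval_nonneg {n k : ℕ} {t : ℝ} (ht : t ∈ Set.Icc (0 : ℝ) 1) :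
    0 ≤ (bernsteinPolynomial ℝ n k).eval t := by
  have := ht.1
  have := sub_nonneg.2 ht.2
  simp only [bernsteinPolynomial, eval_mul, eval_pow, eval_natCast, eval_X, eval_sub, eval_one]
  positivity

lemma sum_bernsteinPolynomial_eval (n : ℕ) (t : ℝ) :
    ∑ k ∈ range (n + 1), (bernsteinPolynomial ℝ n k).eval t = 1 := by
  simpa [eval_finsetSum] using congrArg (eval t) (bernsteinPolynomial.sum ℝ n)

lemma derivative_sum_bernsteinPolynomial_tail {n k : ℕ} (hk : k ≤ n) :
    derivative (∑ i ∈ range (n - k + 1), bernsteinPolynomial ℝ (n + 1) (k + i + 1))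
      = (n + 1) * bernsteinPolynomial ℝ n k := by
  have htelescope := sum_range_sub' (fun i => bernsteinPolynomial ℝ n (k + i)) (n - k + 1)
  simp only [← add_assoc, add_zero] at htelescope
  simp only [derivative_sum, bernsteinPolynomial.derivative_succ_aux, ← mul_sum, htelescope,
    bernsteinPolynomial.eq_zero_of_lt ℝ (by omega : n < k + (n - k) + 1), sub_zero]

lemma integral_bernsteinPolynomial_eval {n k : ℕ} (hk : k ≤ n) :
    ∫ t in (0 : ℝ)..1, (bernsteinPolynomial ℝ n k).eval t = 1 / (n + 1) := by
  set F := ∑ i ∈ range (n - k + 1), bernsteinPolynomial ℝ (n + 1) (k + i + 1) with hF_def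
  have hF : ∀ t, HasDerivAt F.eval ((n + 1) * (bernsteinPolynomial ℝ n k).eval t) t := by
    intro t
    have h := F.hasDerivAt t
    rw [hF_def, derivative_sum_bernsteinPolynomial_tail hk] at h
    simpa using h
  have hF_one : F.eval 1 = 1 := by
    have hiff : ∀ i, k + i = n ↔ n - k = i := fun i => by omega
    simp [F, eval_finsetSum, bernsteinPolynomial.eval_at_1, hiff]
  have hF_zero : F.eval 0 = 0 := by
    simp [F, eval_finsetSum, bernsteinPolynomial.eval_at_0]
  have hFTC := integral_eq_sub_of_hasDerivAt (fun t _ => hF t)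
    (((Polynomial.continuous _).const_mul _).intervalIntegrable 0 1)
  rw [intervalIntegral.integral_const_mul, hF_one, hF_zero] at hFTC
  field_simp
  linarith

section Bezier

variable {E : Type*} [NormedAddCommGroup E] [NormedSpace ℝ E]

lemma sq_norm_sum_smul_le {ι : Type*} {s : Finset ι} {w : ι → ℝ} (x : ι → E)
    (hw₀ : ∀ i ∈ s, 0 ≤ w i) (hw₁ : ∑ i ∈ s, w i = 1) :
    ‖∑ i ∈ s, w i • x i‖ ^ 2 ≤ ∑ i ∈ s, w i * ‖x i‖ ^ 2 := by
  simpa using (convexOn_univ_norm.pow (fun _ _ => norm_nonneg _) 2).map_sum_le hw₀ hw₁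
    (fun i _ => Set.mem_univ (x i))

noncomputable def bezier (n : ℕ) (P : ℕ → E) (t : ℝ) : E :=
  ∑ k ∈ range (n + 1), (bernsteinPolynomial ℝ n k).eval t • P k

lemma sum_derivative_bernsteinPolynomial_smul (n : ℕ) (P : ℕ → E) (t : ℝ) :
    ∑ k ∈ range (n + 2), (derivative (bernsteinPolynomial ℝ (n + 1) k)).eval t • P k
      = ∑ k ∈ range (n + 1),
          (bernsteinPolynomial ℝ n k).eval t • ((n + 1 : ℝ) • (P (k + 1) - P k)) := by
  set c : ℕ → ℝ := fun k => (n + 1) * (bernsteinPolynomial ℝ n k).eval t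
  have hc_top : c (n + 1) = 0 := by
    simp [c, bernsteinPolynomial.eq_zero_of_lt ℝ (Nat.lt_succ_self n)]
  have hderiv_zero : (derivative (bernsteinPolynomial ℝ (n + 1) 0)).eval t = -c 0 := by
    simp [c, bernsteinPolynomial.derivative_zero]
    ring
  have hderiv_succ :
      ∀ k, (derivative (bernsteinPolynomial ℝ (n + 1) (k + 1))).eval t = c k - c (k + 1) := by
    intro k
    simp [c, bernsteinPolynomial.derivative_succ_aux, mul_sub]
  calc _ = ∑ k ∈ range (n + 1), c k • P (k + 1)
        - (∑ k ∈ range (n + 1), c (k + 1) • P (k + 1) + c 0 • P 0) := by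
        simp only [sum_range_succ' _ (n + 1), hderiv_zero, hderiv_succ, sub_smul, neg_smul,
          sum_sub_distrib]
        abel
    _ = ∑ k ∈ range (n + 1), c k • P (k + 1) - ∑ k ∈ range (n + 1), c k • P k := by
        rw [← sum_range_succ' (fun k => c k • P k), sum_range_succ _ (n + 1), hc_top, zero_smul,
          add_zero]
    _ = _ := by
        simp only [← sum_sub_distrib, ← smul_sub, c, mul_comm (n + 1 : ℝ), mul_smul]

lemma hasDerivAt_bezier (n : ℕ) (P : ℕ → E) (t : ℝ) :
    HasDerivAt (bezier (n + 1) P)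
      (∑ k ∈ range (n + 1),
        (bernsteinPolynomial ℝ n k).eval t • ((n + 1 : ℝ) • (P (k + 1) - P k))) t := by
  rw [← sum_derivative_bernsteinPolynomial_smul]
  exact HasDerivAt.fun_sum fun k _ =>
    ((bernsteinPolynomial ℝ (n + 1) k).hasDerivAt t).smul_const (P k)

lemma integral_sq_norm_deriv_bezier_le (n : ℕ) (P : ℕ → E) :
    ∫ t in (0 : ℝ)..1, ‖deriv (bezier (n + 1) P) t‖ ^ 2
      ≤ (n + 1) * ∑ k ∈ range (n + 1), ‖P (k + 1) - P k‖ ^ 2 := by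
  set Q : ℕ → E := fun k => (n + 1 : ℝ) • (P (k + 1) - P k)
  have hderiv : deriv (bezier (n + 1) P)
      = fun t => ∑ k ∈ range (n + 1), (bernsteinPolynomial ℝ n k).eval t • Q k :=
    funext fun t => (hasDerivAt_bezier n P t).deriv
  have hpointwise : ∀ t ∈ Set.Icc (0 : ℝ) 1, ‖deriv (bezier (n + 1) P) t‖ ^ 2
      ≤ ∑ k ∈ range (n + 1), (bernsteinPolynomial ℝ n k).eval t * ‖Q k‖ ^ 2 := fun t ht => by
    rw [hderiv]
    exact sq_norm_sum_smul_le Q (fun k _ => bernsteinPolynomial_eval_nonneg ht)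
      (sum_bernsteinPolynomial_eval n t)
  calc _ ≤ ∫ t in (0 : ℝ)..1,
          ∑ k ∈ range (n + 1), (bernsteinPolynomial ℝ n k).eval t * ‖Q k‖ ^ 2 :=
        integral_mono_on zero_le_one
          (by rw [hderiv]; exact Continuous.intervalIntegrable (by fun_prop) _ _)
          (Continuous.intervalIntegrable (by fun_prop) _ _) hpointwise
    _ = ∑ k ∈ range (n + 1), 1 / (n + 1) * ‖Q k‖ ^ 2 := by
        rw [integral_finsetSum fun k _ => Continuous.intervalIntegrable (by fun_prop) _ _]
        refine sum_congr rfl fun k hk => ?_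
        rw [intervalIntegral.integral_mul_const,
          integral_bernsteinPolynomial_eval (Nat.lt_succ_iff.1 (mem_range.1 hk))]
    _ = _ := by
        simp only [Q, norm_smul, mul_pow, mul_sum,
          Real.norm_of_nonneg (by positivity : (0 : ℝ) ≤ n + 1)]
        exact sum_congr rfl fun k _ => by field_simp

variable [CompleteSpace E]

lemma sq_norm_intervalIntegral_le {f : ℝ → E} {a b : ℝ} (hab : a ≤ b)
    (hf : IntervalIntegrable f volume a b)
    (hf_sq : IntervalIntegrable (fun x => ‖f x‖ ^ 2) volume a b) :
    ‖∫ x in a..b, f x‖ ^ 2 ≤ (b - a) * ∫ x in a..b, ‖f x‖ ^ 2 := by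
  rcases hab.eq_or_lt with rfl | hlt
  · simp
  have hpos : 0 < b - a := sub_pos.2 hlt
  have hJensen := (convexOn_univ_norm.pow (fun _ _ => norm_nonneg _) 2).map_set_average_le
    ((continuous_norm.pow 2).continuousOn) isClosed_univ (by simp [hlt]) (by simp)
    (Filter.Eventually.of_forall fun _ => Set.mem_univ _)
    ((intervalIntegrable_iff_integrableOn_Ioc_of_le hab).1 hf)
    ((intervalIntegrable_iff_integrableOn_Ioc_of_le hab).1 hf_sq)
  simp only [setAverage_eq, Real.volume_real_Ioc_of_le hab, ← integral_of_le hab, Pi.pow_apply,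
    norm_smul, smul_eq_mul, mul_pow, Real.norm_of_nonneg (inv_nonneg.2 hpos.le)] at hJensen
  have := mul_le_mul_of_nonneg_left hJensen (sq_nonneg (b - a))
  field_simp at this
  linarith

lemma sq_norm_sub_le_mul_integral_sq_norm_deriv {f : ℝ → E} (hf : ContDiff ℝ 1 f) {a b : ℝ}
    (hab : a ≤ b) : ‖f b - f a‖ ^ 2 ≤ (b - a) * ∫ x in a..b, ‖deriv f x‖ ^ 2 := by
  have hcont := hf.continuous_deriv le_rfl
  rw [← integral_deriv_eq_sub (fun x _ => hf.differentiable one_ne_zero x)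
    (hcont.intervalIntegrable _ _)]
  exact sq_norm_intervalIntegral_le hab (hcont.intervalIntegrable _ _)
    ((hcont.norm.pow 2).intervalIntegrable _ _)

lemma mul_sum_sq_norm_sub_le_integral_sq_norm_deriv {f : ℝ → E} (hf : ContDiff ℝ 1 f) (n : ℕ) :
    (n + 1) * ∑ k ∈ range (n + 1), ‖f ((k + 1) / (n + 1)) - f (k / (n + 1))‖ ^ 2
      ≤ ∫ t in (0 : ℝ)..1, ‖deriv f t‖ ^ 2 := by
  set a : ℕ → ℝ := fun k => k / (n + 1)
  have hn : (0 : ℝ) < n + 1 := by positivity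
  have hstep : ∀ k : ℕ, a (k + 1) - a k = 1 / (n + 1) := fun k => by
    simp only [a]; push_cast; field_simp; ring
  calc _ = ∑ k ∈ range (n + 1), (n + 1) * ‖f (a (k + 1)) - f (a k)‖ ^ 2 := by
        simp only [mul_sum, a]; push_cast; rfl
    _ ≤ ∑ k ∈ range (n + 1), ∫ t in a k..a (k + 1), ‖deriv f t‖ ^ 2 := sum_le_sum fun k _ => by
        have h := sq_norm_sub_le_mul_integral_sq_norm_deriv hf
          (by linarith [hstep k, one_div_pos.2 hn] : a k ≤ a (k + 1))
        rw [hstep] at h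
        rwa [← le_div_iff₀' hn, div_eq_inv_mul, ← one_div]
    _ = ∫ t in a 0..a (n + 1), ‖deriv f t‖ ^ 2 :=
        sum_integral_adjacent_intervals fun k _ =>
          ((hf.continuous_deriv le_rfl).norm.pow 2).intervalIntegrable _ _
    _ = _ := by simp only [a]; push_cast; rw [zero_div, div_self hn.ne']

end Bezier

/-- The Bézier curve with control points γ(k/m) has Dirichlet energy no greater
than that of the C¹ curve γ. -/
theorem bezier_energy_le {d m : ℕ} (hm : 1 ≤ m)
    (γ : ℝ → EuclideanSpace ℝ (Fin d)) (hγ : ContDiff ℝ 1 γ)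
    (B : ℝ → EuclideanSpace ℝ (Fin d))
    (hB : ∀ t : ℝ, B t = ∑ k ∈ Finset.range (m+1),
      ((m.choose k : ℝ) * t^k * (1-t)^(m-k)) • γ ((k : ℝ) / m)) :
    ∫ t in (0:ℝ)..1, ‖deriv B t‖^2 ≤ ∫ t in (0:ℝ)..1, ‖deriv γ t‖^2 := by
  obtain ⟨n, rfl⟩ : ∃ n, m = n + 1 := ⟨m - 1, by omega⟩
  obtain rfl : B = bezier (n + 1) fun k => γ (k / (n + 1 : ℕ)) :=
    funext fun t => by simp [hB, bezier, bernsteinPolynomial]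
  calc _ ≤ _ := integral_sq_norm_deriv_bezier_le n _
    _ ≤ _ := by push_cast; exact mul_sum_sq_norm_sub_le_integral_sq_norm_deriv hγ n
end

section
/- Let Γ be a metric space, w : Γ → (0, +∞] a lower semicontinuous function, and D = { σ ∈ M₊(Γ) : ∫_Γ w dσ ≤ 1 } the set of nonnegative finite Radon measures with w-mass at most 1. Then for any γ ∈ Γ with w(γ) < +∞, the measure w(γ)^{-1} δ_γ is an extreme point of the convex set D. -/
open MeasureTheory
open scoped ENNReal

/-!
If `w(γ)⁻¹ δ_γ = λ σ₁ + (1 - λ) σ₂`, each `σᵢ` is absolutely continuous with respect to `δ_γ`,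
hence equal to `mᵢ δ_γ` with `mᵢ = σᵢ(Γ)`. The constraint `∫ w dσᵢ = mᵢ w(γ) ≤ 1` gives
`mᵢ ≤ w(γ)⁻¹`, while the total masses satisfy `λ m₁ + (1 - λ) m₂ = w(γ)⁻¹`; a convex combination
of two numbers bounded by `w(γ)⁻¹` attains it only if both do.
-/

namespace ENNReal

theorem eq_of_mul_add_mul_eq_of_le {p q a b c : ℝ≥0∞} (hp : p ≠ 0) (hpq : p + q = 1)
    (ha : a ≤ c) (hb : b ≤ c) (hc : c ≠ ∞) (h : p * a + q * b = c) : a = c := by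
  by_contra hne
  have hp_top : p ≠ ∞ := ne_top_of_le_ne_top one_ne_top (hpq ▸ le_self_add)
  have hq_top : q ≠ ∞ := ne_top_of_le_ne_top one_ne_top (hpq ▸ le_add_self)
  have : p * a + q * b < c :=
    calc p * a + q * b
        < p * c + q * c :=
          ENNReal.add_lt_add_of_lt_of_le (mul_ne_top hq_top (ne_top_of_le_ne_top hc hb))
            (ENNReal.mul_lt_mul_right hp hp_top (ha.lt_of_ne hne)) (mul_le_mul_right hb q)
      _ = c := by rw [← add_mul, hpq, one_mul]
  exact this.ne h

end ENNReal

namespace MeasureTheory.Measure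

variable {α : Type*} [MeasurableSpace α]

theorem eq_smul_dirac_of_absolutelyContinuous {μ : Measure α} {x : α} (h : μ ≪ dirac x) :
    μ = μ Set.univ • dirac x := by
  ext s hs
  rw [smul_apply, dirac_apply' _ hs, smul_eq_mul]
  by_cases hx : x ∈ s
  · have hsc : μ sᶜ = 0 := h (by simp [dirac_apply' _ hs.compl, hx])
    simp [hx, ← measure_add_measure_compl hs, hsc]
  · simp [hx, h (by simp [dirac_apply' _ hs, hx] : dirac x s = 0)]

theorem absolutelyContinuous_of_smul_add_smul_eq {μ ν ρ : Measure α} {p q : ℝ≥0∞}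
    (hp : p ≠ 0) (h : p • μ + q • ν = ρ) : μ ≪ ρ :=
  (absolutelyContinuous_smul hp).trans
    (absolutelyContinuous_of_le (h ▸ Measure.le_add_right le_rfl))

theorem le_inv_of_lintegral_smul_dirac_le_one [MeasurableSingletonClass α] {w : α → ℝ≥0∞}
    {m : ℝ≥0∞} {x : α} (h : ∫⁻ y, w y ∂(m • dirac x) ≤ 1) : m ≤ (w x)⁻¹ := by
  rwa [lintegral_smul_measure, lintegral_dirac, smul_eq_mul, ← ENNReal.le_inv_iff_mul_le] at h

end MeasureTheory.Measure

open Measure in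
theorem dirac_extreme_point_general {Γ : Type*} [MetricSpace Γ] [MeasurableSpace Γ] [BorelSpace Γ]
    (w : Γ → ℝ≥0∞) (γ : Γ) :
    ∀ σ₁ σ₂ : Measure Γ, IsFiniteMeasure σ₁ → IsFiniteMeasure σ₂ →
      (∫⁻ x, w x ∂σ₁) ≤ 1 → (∫⁻ x, w x ∂σ₂) ≤ 1 →
      ∀ lam : ℝ≥0∞, 0 < lam → lam < 1 →
        (w γ)⁻¹ • Measure.dirac γ = lam • σ₁ + (1 - lam) • σ₂ →
        σ₁ = (w γ)⁻¹ • Measure.dirac γ ∧ σ₂ = (w γ)⁻¹ • Measure.dirac γ := by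
  intro σ₁ σ₂ _ _ h₁ h₂ lam hl0 hl1 heq
  have hl1' : 1 - lam ≠ 0 := (tsub_pos_of_lt hl1).ne'
  have hσ₁ : σ₁ = σ₁ Set.univ • dirac γ := eq_smul_dirac_of_absolutelyContinuous <|
    (absolutelyContinuous_of_smul_add_smul_eq hl0.ne' heq.symm).trans smul_absolutelyContinuous
  have hσ₂ : σ₂ = σ₂ Set.univ • dirac γ := eq_smul_dirac_of_absolutelyContinuous <|
    (absolutelyContinuous_of_smul_add_smul_eq hl1' ((add_comm _ _).trans heq.symm)).trans
      smul_absolutelyContinuous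
  have hmass : lam * σ₁ Set.univ + (1 - lam) * σ₂ Set.univ = (w γ)⁻¹ := by
    simpa using (congrArg (· Set.univ) heq).symm
  -- finiteness of the `σᵢ` rules out `w γ = 0`
  have hfin : (w γ)⁻¹ ≠ ∞ := hmass ▸ by finiteness
  have hsum : lam + (1 - lam) = 1 := add_tsub_cancel_of_le hl1.le
  have hm₁ := le_inv_of_lintegral_smul_dirac_le_one (hσ₁ ▸ h₁)
  have hm₂ := le_inv_of_lintegral_smul_dirac_le_one (hσ₂ ▸ h₂)
  constructor
  · rw [hσ₁, ENNReal.eq_of_mul_add_mul_eq_of_le hl0.ne' hsum hm₁ hm₂ hfin hmass]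
  · rw [hσ₂, ENNReal.eq_of_mul_add_mul_eq_of_le hl1' ((add_comm _ _).trans hsum) hm₂ hm₁
      hfin ((add_comm _ _).trans hmass)]

/-- For a lower semicontinuous positive weight w and γ with w(γ) < ∞, the
rescaled Dirac measure w(γ)⁻¹ δ_γ is an extreme point of
D = {σ ∈ M₊(Γ) : ∫ w dσ ≤ 1}. -/
theorem dirac_extreme_point {Γ : Type*} [MetricSpace Γ] [MeasurableSpace Γ] [BorelSpace Γ]
    (w : Γ → ℝ≥0∞) (hw : LowerSemicontinuous w) (hwpos : ∀ γ, 0 < w γ)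
    (γ : Γ) (hγ : w γ < ⊤) :
    ∀ σ₁ σ₂ : Measure Γ, IsFiniteMeasure σ₁ → IsFiniteMeasure σ₂ →
      (∫⁻ x, w x ∂σ₁) ≤ 1 → (∫⁻ x, w x ∂σ₂) ≤ 1 →
      ∀ lam : ℝ≥0∞, 0 < lam → lam < 1 →
        (w γ)⁻¹ • Measure.dirac γ = lam • σ₁ + (1 - lam) • σ₂ →
        σ₁ = (w γ)⁻¹ • Measure.dirac γ ∧ σ₂ = (w γ)⁻¹ • Measure.dirac γ :=
  dirac_extreme_point_general w γ
end
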